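/- For every integer p ≥ 1, the characteristic polynomials P_n of the adjacency matrices A_n of the finite Schreier graphs of the star automaton group 𝒢_{S_p} satisfy: P_1(λ) = (λ − 2p)(λ + 2)(λ − 2(p−1))^{p−1}, and for every n ≥ 1, P_{n+1}(λ) = (λ − 2(p−1))^{(p−1)(p+1)^n} · P_n(f_p(λ)), where f_p(λ) = λ² − 2(p−1)λ − 2p; that is, in ℝ[X], P_{n+1} = (X − 2(p−1))^{(p−1)(p+1)^n} · (P_n composed with X² − 2(p−1)X − 2p). -/

import Mathlib

open Polynomial Matrix

/-- The action of the generator `e_i` of the star automaton group `𝒢_{S_p}` on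
words of length `n` over the alphabet `X = {0, 1, …, p}`. -/
def starWord (p : ℕ) (i : Fin (p + 1)) : (n : ℕ) → (Fin n → Fin (p + 1)) → Fin n → Fin (p + 1)
  | 0, w => w
  | n + 1, w =>
    if w 0 = 0 then Fin.cons i (starWord p i n (Fin.tail w))
    else if w 0 = i then Fin.cons 0 (Fin.tail w)
    else w

/-- The real permutation matrix of `e_i^{(n)}`. -/
noncomputable def starMat (p n : ℕ) (i : Fin (p + 1)) :
    Matrix (Fin n → Fin (p + 1)) (Fin n → Fin (p + 1)) ℝ :=
  fun u v => if starWord p i n u = v then 1 else 0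

/-- The adjacency matrix `A_n = Σ_{i=1}^p (M_{i,n} + M_{i,n}ᵀ)` of the `n`-th
Schreier graph of the star automaton group `𝒢_{S_p}`. -/
noncomputable def starAdj (p n : ℕ) :
    Matrix (Fin n → Fin (p + 1)) (Fin n → Fin (p + 1)) ℝ :=
  ∑ i : Fin p, (starMat p n i.succ + (starMat p n i.succ)ᵀ)

/-!
Splitting a word of length `n + 1` by its first letter (`0`, or `k + 1` with `k : Fin p`) puts
`A_{n+1}` in the block form `[[0, B], [Bᵀ, 2(p-1) I]]`, where `B = [M_1 + 1 | ⋯ | M_p + 1]`.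
The `M_i` are permutation matrices, so `B Bᵀ = A_n + 2p I`. Eliminating the lower-left block
against the scalar block gives `P_{n+1} (λ - c)^N = (λ - c)^{pN} det(λ(λ - c) - B Bᵀ)` with
`c = 2(p-1)` and `N = (p+1)^n`, which is the recursion. The formula for `P_1` is its case
`n = 0`, as `A_0` is the `1 × 1` matrix `(2p)`.
-/

namespace Matrix

variable {R : Type*} [CommRing R] {m k : Type*} [Fintype m] [DecidableEq m] [Fintype k]
  [DecidableEq k]

theorem charpoly_comp_eq_det (M : Matrix m m R) (q : R[X]) :
    M.charpoly.comp q = (scalar m q - M.map C).det := by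
  have h : (charmatrix M).map (compRingHom q) = scalar m q - M.map C := by
    ext i j
    by_cases hij : i = j
    · subst hij; simp
    · simp [hij, charmatrix_apply_ne]
  rw [charpoly, ← coe_compRingHom_apply, RingHom.map_det, RingHom.mapMatrix_apply, h]

theorem charpoly_fromBlocks_zero_scalar_mul_pow (B : Matrix m k R) (D : Matrix k m R) (c : R) :
    (fromBlocks 0 B D (scalar k c)).charpoly * (X - C c) ^ Fintype.card m =
      (X - C c) ^ Fintype.card k * (B * D).charpoly.comp (X * (X - C c)) := by
  let E : Matrix (m ⊕ k) (m ⊕ k) R[X] := fromBlocks (scalar m (X - C c)) 0 (D.map C) 1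
  have hE : E.det = (X - C c) ^ Fintype.card m := by simp [E]
  have hmul : charmatrix (fromBlocks 0 B D (scalar k c)) * E =
      fromBlocks (scalar m (X * (X - C c)) - (B * D).map C) (-B.map C) 0 (scalar k (X - C c)) := by
    have hscalar : charmatrix (scalar k c) = scalar k (X - C c) := by simp
    rw [charmatrix_fromBlocks, charmatrix_zero, hscalar, fromBlocks_multiply, fromBlocks_inj]
    refine ⟨?_, by simp, ?_, by simp⟩
    · rw [← map_mul, Matrix.map_mul, Matrix.neg_mul, ← sub_eq_add_neg]
    · rw [Matrix.neg_mul, neg_add_eq_zero]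
      exact (scalar_comm _ (Commute.all _) _).symm
  rw [charpoly, ← hE, ← det_mul, hmul, det_fromBlocks_zero₂₁, ← charpoly_comp_eq_det]
  simp [mul_comm]

end Matrix

section StarAutomaton

variable (p : ℕ)

def starWordInv (i : Fin (p + 1)) : (n : ℕ) → (Fin n → Fin (p + 1)) → Fin n → Fin (p + 1)
  | 0, w => w
  | n + 1, w =>
    if w 0 = i then Fin.cons 0 (starWordInv i n (Fin.tail w))
    else if w 0 = 0 then Fin.cons i (Fin.tail w)
    else w

theorem starWordInv_starWord (i : Fin (p + 1)) :
    ∀ n (w : Fin n → Fin (p + 1)), starWordInv p i n (starWord p i n w) = w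
  | 0, _ => rfl
  | n + 1, w => by
    conv_rhs => rw [← Fin.cons_self_tail w]
    by_cases h0 : w 0 = 0
    · simp [starWord, starWordInv, h0, starWordInv_starWord i n]
    by_cases hi : w 0 = i
    · subst hi
      simp [starWord, starWordInv, h0, Ne.symm h0]
    · simp [starWord, starWordInv, h0, hi]

theorem starWord_injective (n : ℕ) (i : Fin (p + 1)) : Function.Injective (starWord p i n) :=
  Function.LeftInverse.injective (starWordInv_starWord p i n)

theorem starMat_mul_transpose (n : ℕ) (i : Fin (p + 1)) :
    starMat p n i * (starMat p n i)ᵀ = 1 := by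
  ext u v
  simp [mul_apply, starMat, one_apply, (starWord_injective p n i).eq_iff]

variable (n : ℕ)

def splitFirstLetter :
    (Fin n → Fin (p + 1)) ⊕ (Fin p × (Fin n → Fin (p + 1))) ≃ (Fin (n + 1) → Fin (p + 1)) where
  toFun := Sum.elim (fun u => Fin.cons 0 u) (fun iw => Fin.cons iw.1.succ iw.2)
  invFun w := if h : w 0 = 0 then .inl (Fin.tail w) else .inr ((w 0).pred h, Fin.tail w)
  left_inv s := by rcases s with u | ⟨i, u⟩ <;> simp [Fin.succ_ne_zero]
  right_inv w := by
    conv_rhs => rw [← Fin.cons_self_tail w]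
    by_cases h : w 0 = 0 <;> simp [h]

def starStep (k : Fin p) :
    (Fin n → Fin (p + 1)) ⊕ (Fin p × (Fin n → Fin (p + 1))) →
      (Fin n → Fin (p + 1)) ⊕ (Fin p × (Fin n → Fin (p + 1)))
  | .inl u => .inr (k, starWord p k.succ n u)
  | .inr (j, v) => if j = k then .inl v else .inr (j, v)

theorem starWord_splitFirstLetter (k : Fin p) (s) :
    starWord p k.succ (n + 1) (splitFirstLetter p n s) =
      splitFirstLetter p n (starStep p n k s) := by
  rcases s with u | ⟨j, v⟩
  · simp [splitFirstLetter, starStep, starWord]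
  · by_cases h : j = k <;> simp [splitFirstLetter, starStep, starWord, h, Fin.succ_ne_zero]

theorem starMat_succ_splitFirstLetter (k : Fin p) (s t) :
    starMat p (n + 1) k.succ (splitFirstLetter p n s) (splitFirstLetter p n t) =
      if starStep p n k s = t then 1 else 0 := by
  simp only [starMat, starWord_splitFirstLetter, Equiv.apply_eq_iff_eq]

noncomputable def starOffBlock : Matrix (Fin n → Fin (p + 1)) (Fin p × (Fin n → Fin (p + 1))) ℝ :=
  fun u jv => (starMat p n jv.1.succ + 1) u jv.2

theorem starAdj_succ_submatrix :
    (starAdj p (n + 1)).submatrix (splitFirstLetter p n) (splitFirstLetter p n) =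
      fromBlocks 0 (starOffBlock p n) (starOffBlock p n)ᵀ (scalar _ (2 * ((p : ℝ) - 1))) := by
  ext (u | ⟨i, u⟩) (v | ⟨j, v⟩) <;>
    simp only [submatrix_apply, starAdj, Matrix.sum_apply, Matrix.add_apply, transpose_apply,
      starMat_succ_splitFirstLetter, starStep]
  · simp
  · simp [starOffBlock, starMat, one_apply, ite_and, ite_eq_iff, Finset.sum_add_distrib,
      @eq_comm _ v u]
  · simp [starOffBlock, starMat, one_apply, ite_and, ite_eq_iff, Finset.sum_add_distrib,
      @eq_comm _ v u, add_comm]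
  · rcases eq_or_ne (i, u) (j, v) with h | h
    · obtain ⟨rfl, rfl⟩ := Prod.mk.inj h
      simp [Finset.sum_add_distrib, Finset.sum_ite, Finset.filter_ne, Nat.cast_pred i.pos]
      ring
    · have hij : ¬(i = j ∧ u = v) := by simpa using h
      have hji : ¬(j = i ∧ v = u) := fun ⟨h1, h2⟩ => hij ⟨h1.symm, h2.symm⟩
      simp [ite_eq_iff, hij, hji]

theorem starOffBlock_mul_transpose :
    starOffBlock p n * (starOffBlock p n)ᵀ = starAdj p n + scalar _ (2 * (p : ℝ)) := by
  have hsquare (i : Fin (p + 1)) : (starMat p n i + 1) * (starMat p n i + 1)ᵀ =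
      starMat p n i + (starMat p n i)ᵀ + scalar _ (2 : ℝ) := by
    rw [transpose_add, transpose_one, mul_add, add_mul, add_mul, starMat_mul_transpose, mul_one,
      one_mul, one_mul, scalar_apply, ← smul_one_eq_diagonal, two_smul]
    abel
  ext u v
  rw [mul_apply, Fintype.sum_prod_type]
  have hrow (i : Fin p) : ∑ w, starOffBlock p n u (i, w) * (starOffBlock p n)ᵀ (i, w) v =
      (starMat p n i.succ + (starMat p n i.succ)ᵀ + scalar (Fin n → Fin (p + 1)) (2 : ℝ)) u v := by
    rw [← hsquare, mul_apply]
    rfl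
  simp only [hrow, Matrix.add_apply, Finset.sum_add_distrib, starAdj, Matrix.sum_apply]
  by_cases h : u = v <;> simp [h, scalar_apply, mul_comm]

theorem charpoly_starAdj_succ (hp : 1 ≤ p) :
    (starAdj p (n + 1)).charpoly =
      (X - C (2 * ((p : ℝ) - 1))) ^ ((p - 1) * (p + 1) ^ n) *
        (starAdj p n).charpoly.comp (X ^ 2 - C (2 * ((p : ℝ) - 1)) * X - C (2 * (p : ℝ))) := by
  set c : ℝ := 2 * ((p : ℝ) - 1)
  have hblock := charpoly_fromBlocks_zero_scalar_mul_pow (starOffBlock p n) (starOffBlock p n)ᵀ c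
  have hsplit : (starAdj p (n + 1)).charpoly =
      (fromBlocks 0 (starOffBlock p n) (starOffBlock p n)ᵀ (scalar _ c)).charpoly := by
    rw [← starAdj_succ_submatrix, ← charpoly_reindex (splitFirstLetter p n).symm]
    rfl
  have hcomp : (starOffBlock p n * (starOffBlock p n)ᵀ).charpoly.comp (X * (X - C c)) =
      (starAdj p n).charpoly.comp (X ^ 2 - C c * X - C (2 * (p : ℝ))) := by
    rw [← add_sub_cancel_right (starAdj p n) (scalar _ (2 * (p : ℝ))), charpoly_sub_scalar,
      ← starOffBlock_mul_transpose, comp_assoc]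
    congr 1
    simp only [add_comp, X_comp, C_comp]
    ring
  have hpN : p * (p + 1) ^ n = (p - 1) * (p + 1) ^ n + (p + 1) ^ n := by
    rw [← add_one_mul, Nat.sub_add_cancel hp]
  simp only [Fintype.card_prod, Fintype.card_pi, Fintype.card_fin, Finset.prod_const,
    Finset.card_univ, hpN, pow_add, hcomp, ← hsplit] at hblock
  apply mul_right_cancel₀ (pow_ne_zero ((p + 1) ^ n) (X_sub_C_ne_zero c))
  rw [hblock]
  ring

theorem charpoly_starAdj_zero : (starAdj p 0).charpoly = X - C (2 * (p : ℝ)) := by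
  rw [charpoly, det_unique, charmatrix_apply_eq]
  congr 2
  simp [starAdj, Matrix.sum_apply, starMat, starWord]
  ring

end StarAutomaton

/-- For every `p ≥ 1`: `P_1(λ) = (λ − 2p)(λ + 2)(λ − 2(p−1))^{p−1}` and, for every `n ≥ 1`,
`P_{n+1}(λ) = (λ − 2(p−1))^{(p−1)(p+1)^n} · P_n(λ² − 2(p−1)λ − 2p)`. -/
theorem stmt2 (p : ℕ) (hp : 1 ≤ p) :
    (starAdj p 1).charpoly =
      (X - C (2 * (p : ℝ))) * (X + C 2) * (X - C (2 * ((p : ℝ) - 1))) ^ (p - 1) ∧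
    ∀ n : ℕ, 1 ≤ n →
      (starAdj p (n + 1)).charpoly =
        (X - C (2 * ((p : ℝ) - 1))) ^ ((p - 1) * (p + 1) ^ n) *
          ((starAdj p n).charpoly.comp
            (X ^ 2 - C (2 * ((p : ℝ) - 1)) * X - C (2 * (p : ℝ)))) := by
  refine ⟨?_, fun n _ => charpoly_starAdj_succ p n hp⟩
  rw [charpoly_starAdj_succ p 0 hp, charpoly_starAdj_zero, sub_comp, X_comp, C_comp]
  simp only [pow_zero, mul_one, map_sub, map_mul, map_natCast, map_ofNat, map_one]
  ring
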